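/- arXiv:1812.01175 — 3 statements merged into one kernel-verified Lean document; each statement's English description precedes it below -/
import Mathlib

section
/- Let $W$ be exponential with rate $\mu = 1/\lambda_1 + 1/\lambda_2 > 0$, and let $\rho > 0$, $0 < \phi_2 < 1$. Then $E[\log_2(1+\rho W) - \log_2(1+\rho\phi_2 W)] = \frac{1}{\ln 2}\left(-e^{\mu/\rho}\operatorname{Ei}(-\mu/\rho) + e^{\mu/(\phi_2\rho)}\operatorname{Ei}(-\mu/(\phi_2\rho))\right)$. -/
open MeasureTheory ProbabilityTheory Real

/-- Exponential integral: `Ei x = -∫_{-x}^∞ e^{-t}/t dt`. -/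
noncomputable def Ei (x : ℝ) : ℝ := -∫ t in Set.Ioi (-x), Real.exp (-t) / t

/-!
Integrating by parts against the density `μ e^{-μx}` gives
`E[ln(1 + aW)] = ∫₀^∞ a / (1 + ax) e^{-μx} dx`; the boundary terms vanish and both integrands
are integrable because `ln(1 + ax) e^{-μx} ≤ (2a/μ) e^{-μx/2}`. The substitution
`t = μ(x + 1/a)` turns the right-hand side into
`e^{μ/a} ∫_{μ/a}^∞ e^{-t}/t dt = -e^{μ/a} Ei(-μ/a)`.
The theorem is the difference of two such expectations, for `a = ρ` and `a = ρφ₂`, divided by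
`ln 2`.
-/

open Set Filter Topology

lemma measurable_gammaPDF (a r : ℝ) : Measurable (gammaPDF a r) :=
  (measurable_gammaPDFReal a r).ennreal_ofReal

lemma toReal_gammaPDF_one_smul {r : ℝ} (hr : 0 ≤ r) (g : ℝ → ℝ) :
    (fun x ↦ (gammaPDF 1 r x).toReal • g x)
      = (Ici 0).indicator (fun x ↦ g x * (r * exp (-(r * x)))) := by
  ext x
  by_cases hx : 0 ≤ x
  · rw [indicator_of_mem (mem_Ici.mpr hx), gammaPDF_of_nonneg hx,
      ENNReal.toReal_ofReal (by positivity)]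
    simp [mul_comm]
  · rw [indicator_of_notMem (fun h ↦ hx (mem_Ici.mp h)), gammaPDF_of_neg (not_le.mp hx)]
    simp

lemma integral_expMeasure {r : ℝ} (hr : 0 ≤ r) (g : ℝ → ℝ) :
    ∫ x, g x ∂expMeasure r = ∫ x in Ioi 0, g x * (r * exp (-(r * x))) := by
  rw [expMeasure, gammaMeasure, integral_withDensity_eq_integral_toReal_smul
      (measurable_gammaPDF 1 r) (ae_of_all _ fun _ ↦ ENNReal.ofReal_lt_top),
    toReal_gammaPDF_one_smul hr, integral_indicator measurableSet_Ici,
    integral_Ici_eq_integral_Ioi]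

lemma integrable_expMeasure_iff {r : ℝ} (hr : 0 ≤ r) {g : ℝ → ℝ} :
    Integrable g (expMeasure r) ↔
      IntegrableOn (fun x ↦ g x * (r * exp (-(r * x)))) (Ioi 0) := by
  rw [expMeasure, gammaMeasure, integrable_withDensity_iff_integrable_smul'
      (measurable_gammaPDF 1 r) (ae_of_all _ fun _ ↦ ENNReal.ofReal_lt_top),
    toReal_gammaPDF_one_smul hr, integrable_indicator_iff measurableSet_Ici,
    integrableOn_Ici_iff_integrableOn_Ioi]

lemma integral_comp_add_right_Ioi {E : Type*} [NormedAddCommGroup E] [NormedSpace ℝ E]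
    (g : ℝ → E) (a d : ℝ) :
    ∫ x in Ioi a, g (x + d) = ∫ x in Ioi (a + d), g x := by
  rw [← integral_indicator measurableSet_Ioi, ← integral_indicator measurableSet_Ioi,
    ← integral_add_right_eq_self ((Ioi (a + d)).indicator g) d]
  congr 1
  ext x
  simp only [indicator_apply, mem_Ioi, add_lt_add_iff_right]

section
variable {μ a : ℝ}

lemma log_one_add_mul_mul_exp_neg_le (hμ : 0 < μ) (ha : 0 ≤ a) {x : ℝ} (hx : 0 ≤ x) :
    log (1 + a * x) * exp (-(μ * x)) ≤ 2 * a / μ * exp (-(μ / 2 * x)) := by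
  have hlog : log (1 + a * x) ≤ a * x := by
    linarith [log_le_sub_one_of_pos (by positivity : 0 < 1 + a * x)]
  have hlin : a * x ≤ 2 * a / μ * exp (μ / 2 * x) :=
    calc a * x = 2 * a / μ * (μ / 2 * x) := by field_simp
      _ ≤ 2 * a / μ * exp (μ / 2 * x) := by gcongr; linarith [add_one_le_exp (μ / 2 * x)]
  calc log (1 + a * x) * exp (-(μ * x))
      ≤ 2 * a / μ * exp (μ / 2 * x) * exp (-(μ * x)) := by gcongr; exact hlog.trans hlin
    _ = 2 * a / μ * exp (-(μ / 2 * x)) := by rw [mul_assoc, ← exp_add]; ring_nf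

lemma integrableOn_log_one_add_mul_mul_exp_neg (hμ : 0 < μ) (ha : 0 ≤ a) :
    IntegrableOn (fun x ↦ log (1 + a * x) * exp (-(μ * x))) (Ioi 0) := by
  refine ((exp_neg_integrableOn_Ioi 0 (half_pos hμ)).const_mul (2 * a / μ)).mono' ?_ ?_
  · exact ((measurable_log.comp (by fun_prop)).mul (by fun_prop)).aestronglyMeasurable
  · filter_upwards [ae_restrict_mem measurableSet_Ioi] with x hx
    have hx : 0 ≤ x := le_of_lt hx
    rw [norm_of_nonneg (mul_nonneg (log_nonneg (by nlinarith)) (exp_pos _).le), neg_mul]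
    exact log_one_add_mul_mul_exp_neg_le hμ ha hx

lemma integrableOn_div_one_add_mul_mul_exp_neg (hμ : 0 < μ) (ha : 0 ≤ a) :
    IntegrableOn (fun x ↦ a / (1 + a * x) * exp (-(μ * x))) (Ioi 0) := by
  refine ((exp_neg_integrableOn_Ioi 0 hμ).const_mul a).mono' ?_ ?_
  · exact ((measurable_const.div (by fun_prop)).mul (by fun_prop)).aestronglyMeasurable
  · filter_upwards [ae_restrict_mem measurableSet_Ioi] with x hx
    have hx : 0 ≤ x := le_of_lt hx
    rw [norm_of_nonneg (by positivity), neg_mul]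
    gcongr
    exact div_le_self ha (by nlinarith)

lemma tendsto_log_one_add_mul_mul_exp_neg_atTop (hμ : 0 < μ) (ha : 0 ≤ a) :
    Tendsto (fun x ↦ log (1 + a * x) * exp (-(μ * x))) atTop (𝓝 0) := by
  have hbound : Tendsto (fun x ↦ 2 * a / μ * exp (-(μ / 2 * x))) atTop (𝓝 0) := by
    simpa using (tendsto_exp_atBot.comp
      (tendsto_neg_atTop_atBot.comp (tendsto_id.const_mul_atTop (half_pos hμ)))).const_mul
        (2 * a / μ)
  refine squeeze_zero' ?_ ?_ hbound
  · filter_upwards [eventually_ge_atTop 0] with x hx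
    exact mul_nonneg (log_nonneg (by nlinarith)) (exp_pos _).le
  · filter_upwards [eventually_ge_atTop 0] with x hx
    exact log_one_add_mul_mul_exp_neg_le hμ ha hx

lemma integral_log_one_add_mul_mul_exp_neg (hμ : 0 < μ) (ha : 0 ≤ a) :
    ∫ x in Ioi 0, log (1 + a * x) * (μ * exp (-(μ * x)))
      = ∫ x in Ioi 0, a / (1 + a * x) * exp (-(μ * x)) := by
  have hpos : ∀ x ∈ Ioi (0 : ℝ), 0 < 1 + a * x := fun x hx ↦ by
    have : 0 ≤ a * x := mul_nonneg ha (le_of_lt hx)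
    linarith
  have hu : ∀ x ∈ Ioi (0 : ℝ), HasDerivAt (fun y ↦ log (1 + a * y)) (a / (1 + a * x)) x :=
    fun x hx ↦ by
      simpa using (((hasDerivAt_id x).const_mul a).const_add 1).log (hpos x hx).ne'
  have hv : ∀ x ∈ Ioi (0 : ℝ),
      HasDerivAt (fun y ↦ -exp (-(μ * y))) (μ * exp (-(μ * x))) x := fun x _ ↦ by
      simpa [mul_comm, Pi.neg_def] using (((hasDerivAt_id x).const_mul μ).neg.exp).neg
  have h_zero : Tendsto (fun x ↦ log (1 + a * x) * -exp (-(μ * x))) (𝓝[>] 0) (𝓝 0) := by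
    apply tendsto_nhdsWithin_of_tendsto_nhds
    have : ContinuousAt (fun x ↦ log (1 + a * x) * -exp (-(μ * x))) 0 :=
      ((continuousAt_log (by norm_num)).comp (by fun_prop)).mul (by fun_prop)
    simpa using this.tendsto
  have h_infty : Tendsto (fun x ↦ log (1 + a * x) * -exp (-(μ * x))) atTop (𝓝 0) := by
    simpa using (tendsto_log_one_add_mul_mul_exp_neg_atTop hμ ha).neg
  have hparts := integral_Ioi_mul_deriv_eq_deriv_mul hu hv
    (IntegrableOn.congr_fun ((integrableOn_log_one_add_mul_mul_exp_neg hμ ha).const_mul μ)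
      (fun x _ ↦ by simp only [Pi.mul_apply]; ring) measurableSet_Ioi)
    ((integrableOn_div_one_add_mul_mul_exp_neg hμ ha).neg.congr_fun
      (fun x _ ↦ by simp only [Pi.mul_apply, Pi.neg_apply]; ring) measurableSet_Ioi)
    h_zero h_infty
  simpa [integral_neg] using hparts

lemma integral_div_one_add_mul_mul_exp_neg (hμ : 0 < μ) (ha : 0 < a) :
    ∫ x in Ioi 0, a / (1 + a * x) * exp (-(μ * x)) = -(exp (μ / a) * Ei (-(μ / a))) := by
  set g : ℝ → ℝ := fun t ↦ exp (-t) / t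
  have hsubst : ∀ x ∈ Ioi (0 : ℝ),
      a / (1 + a * x) * exp (-(μ * x)) = μ * exp (μ / a) * g (μ * (x + 1 / a)) := by
    intro x hx
    have hx : 0 < x := hx
    have hexp : exp (μ / a) * exp (-(μ * (x + 1 / a))) = exp (-(μ * x)) := by
      rw [← exp_add]; congr 1; field_simp; ring
    simp only [g]
    rw [mul_div_assoc', mul_assoc, hexp]
    field_simp
    ring
  calc ∫ x in Ioi 0, a / (1 + a * x) * exp (-(μ * x))
      = μ * exp (μ / a) * ∫ x in Ioi 0, g (μ * (x + 1 / a)) := by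
        rw [setIntegral_congr_fun measurableSet_Ioi hsubst, integral_const_mul]
    _ = μ * exp (μ / a) * (μ⁻¹ * ∫ t in Ioi (μ / a), exp (-t) / t) := by
        rw [integral_comp_add_right_Ioi (fun y ↦ g (μ * y)),
          integral_comp_mul_left_Ioi _ _ hμ, zero_add, mul_one_div, smul_eq_mul]
    _ = -(exp (μ / a) * Ei (-(μ / a))) := by
        rw [Ei, neg_neg, mul_neg, neg_neg]
        field_simp

lemma integrable_log_one_add_mul_expMeasure (hμ : 0 < μ) (ha : 0 ≤ a) :
    Integrable (fun w ↦ log (1 + a * w)) (expMeasure μ) :=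
  (integrable_expMeasure_iff hμ.le).mpr <|
    IntegrableOn.congr_fun ((integrableOn_log_one_add_mul_mul_exp_neg hμ ha).const_mul μ)
      (fun x _ ↦ by ring) measurableSet_Ioi

lemma integral_log_one_add_mul_expMeasure (hμ : 0 < μ) (ha : 0 < a) :
    ∫ w, log (1 + a * w) ∂expMeasure μ = -(exp (μ / a) * Ei (-(μ / a))) := by
  rw [integral_expMeasure hμ.le, integral_log_one_add_mul_mul_exp_neg hμ ha.le,
    integral_div_one_add_mul_mul_exp_neg hμ ha]

end

theorem ergodic_capacity_s1_general
    (lam₁ lam₂ ρ φ₂ : ℝ) (hlam₁ : 0 < lam₁) (hlam₂ : 0 < lam₂)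
    (hρ : 0 < ρ) (hφ₂ : 0 < φ₂) :
    ∫ w, (Real.logb 2 (1 + ρ * w) - Real.logb 2 (1 + ρ * φ₂ * w))
        ∂(expMeasure (1 / lam₁ + 1 / lam₂))
      = (1 / Real.log 2) *
        (-(Real.exp ((1 / lam₁ + 1 / lam₂) / ρ) * Ei (-((1 / lam₁ + 1 / lam₂) / ρ)))
          + Real.exp ((1 / lam₁ + 1 / lam₂) / (φ₂ * ρ))
            * Ei (-((1 / lam₁ + 1 / lam₂) / (φ₂ * ρ)))) := by
  set μ := 1 / lam₁ + 1 / lam₂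
  have hμ : 0 < μ := by positivity
  have hρφ₂ : 0 < ρ * φ₂ := mul_pos hρ hφ₂
  simp only [logb, div_sub_div_same]
  rw [integral_div, integral_sub (integrable_log_one_add_mul_expMeasure hμ hρ.le)
      (integrable_log_one_add_mul_expMeasure hμ hρφ₂.le),
    integral_log_one_add_mul_expMeasure hμ hρ, integral_log_one_add_mul_expMeasure hμ hρφ₂,
    mul_comm φ₂ ρ]
  ring

/-- ergodic capacity integral for symbol s₁:
`E[log₂(1+ρW) - log₂(1+ρφ₂W)]` for `W` exponential with rate `μ = 1/lam₁ + 1/lam₂`. -/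
theorem ergodic_capacity_s1
    (lam₁ lam₂ ρ φ₂ : ℝ) (hlam₁ : 0 < lam₁) (hlam₂ : 0 < lam₂)
    (hρ : 0 < ρ) (hφ₂ : 0 < φ₂) (hφ₂1 : φ₂ < 1) :
    ∫ w, (Real.logb 2 (1 + ρ * w) - Real.logb 2 (1 + ρ * φ₂ * w))
        ∂(expMeasure (1 / lam₁ + 1 / lam₂))
      = (1 / Real.log 2) *
        (-(Real.exp ((1 / lam₁ + 1 / lam₂) / ρ) * Ei (-((1 / lam₁ + 1 / lam₂) / ρ)))
          + Real.exp ((1 / lam₁ + 1 / lam₂) / (φ₂ * ρ))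
            * Ei (-((1 / lam₁ + 1 / lam₂) / (φ₂ * ρ)))) :=
  ergodic_capacity_s1_general lam₁ lam₂ ρ φ₂ hlam₁ hlam₂ hρ hφ₂
end

section
/- Let $H_1, H_3$ be independent exponential random variables with means $\lambda_1, \lambda_3 > 0$, and let $\vartheta_2, \vartheta_3, \rho > 0$. Then the random variable $V = \frac{\vartheta_2 \rho H_3}{\vartheta_3 \rho H_1 + 1}$ has CDF $F_V(v) = 1 - \frac{\vartheta_2\lambda_3}{\vartheta_2\lambda_3 + \vartheta_3\lambda_1 v} e^{-v/(\vartheta_2\rho\lambda_3)}$ for $v \geq 0$. -/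
open MeasureTheory ProbabilityTheory Real

/-!
On the almost sure event `H₁ ≥ 0` the denominator is positive, so `V ≤ v` is the complement of
`c H₁ + d < H₃` with `c = ϑ₃ v / ϑ₂` and `d = v / (ϑ₂ ρ)`. Conditioning on `H₁` and using the
exponential tail of `H₃` gives `P(c H₁ + d < H₃) = e^{-d/λ₃} E[e^{-(c/λ₃) H₁}]`, and the Laplace
transform of `Exp(1/λ₁)` evaluates the expectation as `(1/λ₁) / (1/λ₁ + c/λ₃)`.
-/

namespace ProbabilityTheory

section Exponential

variable {r : ℝ}

lemma expMeasure_eq_withDensity (r : ℝ) :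
    expMeasure r = volume.withDensity (exponentialPDF r) := rfl

lemma measurable_exponentialPDF (r : ℝ) : Measurable (exponentialPDF r) :=
  (measurable_exponentialPDFReal r).ennreal_ofReal

lemma ae_nonneg_expMeasure (r : ℝ) : ∀ᵐ x ∂expMeasure r, 0 ≤ x := by
  rw [ae_iff, expMeasure_eq_withDensity]
  simp only [not_le]
  change volume.withDensity (exponentialPDF r) (Set.Iio 0) = 0
  rw [withDensity_apply _ measurableSet_Iio]
  exact lintegral_exponentialPDF_of_nonpos le_rfl

lemma expMeasure_Ioi (hr : 0 < r) {t : ℝ} (ht : 0 ≤ t) :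
    expMeasure r (Set.Ioi t) = ENNReal.ofReal (exp (-(r * t))) := by
  have := isProbabilityMeasure_expMeasure hr
  have hIic : expMeasure r (Set.Iic t) = ENNReal.ofReal (1 - exp (-(r * t))) := by
    rw [expMeasure_eq_withDensity, withDensity_apply _ measurableSet_Iic,
      lintegral_exponentialPDF_eq_antiDeriv hr, if_pos ht]
  have hexp_le_one : exp (-(r * t)) ≤ 1 := exp_le_one_iff.mpr (by nlinarith)
  rw [← Set.compl_Iic, prob_compl_eq_one_sub measurableSet_Iic, hIic, ← ENNReal.ofReal_one,
    ← ENNReal.ofReal_sub _ (by linarith), sub_sub_cancel]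

lemma lintegral_exp_neg_mul_expMeasure (hr : 0 < r) {s : ℝ} (hs : 0 ≤ s) :
    ∫⁻ x, ENNReal.ofReal (exp (-(s * x))) ∂expMeasure r = ENNReal.ofReal (r / (r + s)) := by
  have hrs : 0 < r + s := by positivity
  have hdensity : ∀ x, exponentialPDF r x * ENNReal.ofReal (exp (-(s * x)))
      = ENNReal.ofReal (r / (r + s)) * exponentialPDF (r + s) x := by
    intro x
    rcases lt_or_ge x 0 with hx | hx
    · simp [exponentialPDF_of_neg hx]
    · rw [exponentialPDF_of_nonneg hx, exponentialPDF_of_nonneg hx,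
        ← ENNReal.ofReal_mul (by positivity), ← ENNReal.ofReal_mul (by positivity),
        mul_assoc, ← exp_add]
      congr 1
      field_simp
      ring_nf
  rw [expMeasure_eq_withDensity, lintegral_withDensity_eq_lintegral_mul _
      (measurable_exponentialPDF r) (by fun_prop)]
  simp only [Pi.mul_apply, hdensity]
  rw [lintegral_const_mul _ (measurable_exponentialPDF _),
    lintegral_exponentialPDF_eq_one hrs, mul_one]

end Exponential

variable {Ω α β : Type*} [MeasurableSpace Ω] [MeasurableSpace α] [MeasurableSpace β]
  {μ : Measure Ω} [IsFiniteMeasure μ]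

lemma IndepFun.measure_preimage_prodMk {X : Ω → α} {Y : Ω → β} (hX : Measurable X)
    (hY : Measurable Y) (hXY : IndepFun X Y μ) {s : Set (α × β)} (hs : MeasurableSet s) :
    μ ((fun ω ↦ (X ω, Y ω)) ⁻¹' s) =
      ∫⁻ x, μ.map Y (Prod.mk x ⁻¹' s) ∂μ.map X := by
  rw [← Measure.map_apply (hX.prodMk hY) hs,
    hXY.map_prod_eq_prod_map_map hX.aemeasurable hY.aemeasurable, Measure.prod_apply hs]

lemma IndepFun.measure_mul_add_lt_of_expMeasure {X Y : Ω → ℝ} (hX : Measurable X)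
    (hY : Measurable Y) (hXY : IndepFun X Y μ) {a b : ℝ} (ha : 0 < a) (hb : 0 < b)
    (hXlaw : μ.map X = expMeasure a) (hYlaw : μ.map Y = expMeasure b) {c d : ℝ}
    (hc : 0 ≤ c) (hd : 0 ≤ d) :
    μ {ω | c * X ω + d < Y ω} = ENNReal.ofReal (exp (-(b * d)) * (a / (a + b * c))) := by
  have hs : MeasurableSet {p : ℝ × ℝ | c * p.1 + d < p.2} :=
    measurableSet_lt (by fun_prop) measurable_snd
  calc μ {ω | c * X ω + d < Y ω}
      = ∫⁻ x, expMeasure b (Set.Ioi (c * x + d)) ∂expMeasure a := by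
        rw [← hXlaw, ← hYlaw]
        exact hXY.measure_preimage_prodMk hX hY hs
    _ = ∫⁻ x, ENNReal.ofReal (exp (-(b * d))) * ENNReal.ofReal (exp (-(b * c * x)))
          ∂expMeasure a := by
        refine lintegral_congr_ae ?_
        filter_upwards [ae_nonneg_expMeasure a] with x hx
        rw [expMeasure_Ioi hb (by positivity), ← ENNReal.ofReal_mul (exp_pos _).le, ← exp_add]
        ring_nf
    _ = ENNReal.ofReal (exp (-(b * d)) * (a / (a + b * c))) := by
        rw [lintegral_const_mul _ (by fun_prop),
          lintegral_exp_neg_mul_expMeasure ha (by positivity), ENNReal.ofReal_mul (exp_pos _).le]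

end ProbabilityTheory

/-- CDF of the uplink-NOMA SINR `V = ϑ₂ρH₃ / (ϑ₃ρH₁ + 1)`. -/
theorem sinr_s2_cdf
    {Ω : Type*} [MeasurableSpace Ω] (μ : Measure Ω) [IsProbabilityMeasure μ]
    (H₁ H₃ : Ω → ℝ) (hH₁ : Measurable H₁) (hH₃ : Measurable H₃)
    (hind : IndepFun H₁ H₃ μ)
    (lam₁ lam₃ ϑ₂ ϑ₃ ρ : ℝ) (hlam₁ : 0 < lam₁) (hlam₃ : 0 < lam₃)
    (hϑ₂ : 0 < ϑ₂) (hϑ₃ : 0 < ϑ₃) (hρ : 0 < ρ)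
    (hH₁law : μ.map H₁ = expMeasure (1 / lam₁))
    (hH₃law : μ.map H₃ = expMeasure (1 / lam₃)) :
    ∀ v : ℝ, 0 ≤ v →
      μ {ω | ϑ₂ * ρ * H₃ ω / (ϑ₃ * ρ * H₁ ω + 1) ≤ v}
        = ENNReal.ofReal
            (1 - ϑ₂ * lam₃ / (ϑ₂ * lam₃ + ϑ₃ * lam₁ * v)
              * Real.exp (-(v / (ϑ₂ * ρ * lam₃)))) := by
  intro v hv
  have hH₁_nonneg : ∀ᵐ ω ∂μ, 0 ≤ H₁ ω :=
    ae_of_ae_map hH₁.aemeasurable (hH₁law ▸ ae_nonneg_expMeasure _)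
  have hevent : {ω | ϑ₂ * ρ * H₃ ω / (ϑ₃ * ρ * H₁ ω + 1) ≤ v}
      =ᵐ[μ] ({ω | ϑ₃ * v / ϑ₂ * H₁ ω + v / (ϑ₂ * ρ) < H₃ ω}ᶜ : Set Ω) := by
    filter_upwards [hH₁_nonneg] with ω hω
    have hthreshold :
        ϑ₃ * v / ϑ₂ * H₁ ω + v / (ϑ₂ * ρ) = v * (ϑ₃ * ρ * H₁ ω + 1) / (ϑ₂ * ρ) := by
      field_simp
    change (_ ≤ v) = ¬(_ < H₃ ω)
    rw [hthreshold, not_lt, div_le_iff₀ (by positivity), le_div_iff₀ (by positivity),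
      mul_comm (H₃ ω)]
  have htail := hind.measure_mul_add_lt_of_expMeasure hH₁ hH₃ (one_div_pos.2 hlam₁)
    (one_div_pos.2 hlam₃) hH₁law hH₃law (c := ϑ₃ * v / ϑ₂) (d := v / (ϑ₂ * ρ))
    (by positivity) (by positivity)
  have hvalue :
      exp (-(1 / lam₃ * (v / (ϑ₂ * ρ)))) * (1 / lam₁ / (1 / lam₁ + 1 / lam₃ * (ϑ₃ * v / ϑ₂)))
        = ϑ₂ * lam₃ / (ϑ₂ * lam₃ + ϑ₃ * lam₁ * v) * exp (-(v / (ϑ₂ * ρ * lam₃))) := by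
    field_simp
  have hmeas : MeasurableSet {ω | ϑ₃ * v / ϑ₂ * H₁ ω + v / (ϑ₂ * ρ) < H₃ ω} :=
    measurableSet_lt (by fun_prop) hH₃
  rw [measure_congr hevent, prob_compl_eq_one_sub hmeas, htail,
    hvalue, ← ENNReal.ofReal_one, ← ENNReal.ofReal_sub _ (by positivity)]
end

section
/- Define $P(\rho) = 1 - \frac{A}{A + BR}e^{-R/(C\rho)}$ with constants $A, B, C, R > 0$. Then $\lim_{\rho\to\infty} P(\rho) = \frac{BR}{A+BR} > 0$ and consequently $\lim_{\rho\to\infty} -\frac{\ln P(\rho)}{\ln \rho} = 0$, i.e., the diversity order under imperfect SIC is zero. -/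
open Filter Real

/-! The factor `exp (-R / (C ρ))` tends to `1`, so the outage probability tends to the positive
floor `1 - A / (A + B R) = B R / (A + B R)`. Hence `log P(ρ)` stays bounded while `log ρ → ∞`. -/

theorem tendsto_exp_neg_const_div_atTop (c : ℝ) :
    Tendsto (fun x : ℝ => exp (-(c / x))) atTop (nhds 1) := by
  have hexponent : Tendsto (fun x : ℝ => -(c / x)) atTop (nhds 0) := by
    simpa using ((tendsto_const_nhds (x := c)).div_atTop tendsto_id).neg
  simpa only [exp_zero] using hexponent.rexp

theorem tendsto_neg_log_div_of_tendsto_pos {α : Type*} {l : Filter α} {f g : α → ℝ} {L : ℝ}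
    (hf : Tendsto f l (nhds L)) (hL : 0 < L) (hg : Tendsto g l atTop) :
    Tendsto (fun x => -(log (f x) / g x)) l (nhds 0) := by
  simpa using ((hf.log hL.ne').div_atTop hg).neg

theorem diversity_order_zero_imperfect_general
    (A B C R : ℝ) (hA : 0 < A) (hB : 0 < B) (hR : 0 < R) :
    Tendsto (fun ρ : ℝ => 1 - A / (A + B * R) * Real.exp (-(R / (C * ρ))))
        atTop (nhds (B * R / (A + B * R)))
    ∧ 0 < B * R / (A + B * R)
    ∧ Tendsto
        (fun ρ : ℝ =>
          -(Real.log (1 - A / (A + B * R) * Real.exp (-(R / (C * ρ))))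
              / Real.log ρ))
        atTop (nhds 0) := by
  have hfloor : 1 - A / (A + B * R) = B * R / (A + B * R) := by
    field_simp
    ring
  have hP : Tendsto (fun ρ : ℝ => 1 - A / (A + B * R) * Real.exp (-(R / (C * ρ))))
      atTop (nhds (B * R / (A + B * R))) := by
    have h := ((tendsto_exp_neg_const_div_atTop (R / C)).const_mul (A / (A + B * R))).const_sub 1
    simpa only [div_div, mul_one, hfloor] using h
  have hpos : 0 < B * R / (A + B * R) := by positivity
  exact ⟨hP, hpos, tendsto_neg_log_div_of_tendsto_pos hP hpos tendsto_log_atTop⟩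

/-- under imperfect SIC the outage floors at `BR/(A+BR) > 0`,
so the diversity order is zero. -/
theorem diversity_order_zero_imperfect
    (A B C R : ℝ) (hA : 0 < A) (hB : 0 < B) (hC : 0 < C) (hR : 0 < R) :
    Tendsto (fun ρ : ℝ => 1 - A / (A + B * R) * Real.exp (-(R / (C * ρ))))
        atTop (nhds (B * R / (A + B * R)))
    ∧ 0 < B * R / (A + B * R)
    ∧ Tendsto
        (fun ρ : ℝ =>
          -(Real.log (1 - A / (A + B * R) * Real.exp (-(R / (C * ρ))))
              / Real.log ρ))
        atTop (nhds 0) :=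
  diversity_order_zero_imperfect_general A B C R hA hB hR
end
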